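/- arXiv:gr-qc/9708068 — 4 statements merged into one kernel-verified Lean document; each statement's English description precedes it below -/
import Mathlib

section
/- Let A be a commutative ℚ-algebra and let δ₁, …, δ_{l} be derivations of A. Define, for each multi-index J in the set J'_l = {(j₁,…,j_{l-1}) ∈ ℕ^{l-1} : ∑_{i=1}^{l-1} i·j_i = l}, the operator D_J := δ₁^{j₁} ∘ ⋯ ∘ δ_{l-1}^{j_{l-1}} with weight w_J := l! / (2!^{j₂} ⋯ (l-1)!^{j_{l-1}} · j₁! ⋯ j_{l-1}!). Then for every f ∈ A: ∑_{J ∈ J'_l} w_J · D_J(f²) = 2 f ∑_{J ∈ J'_l} w_J · D_J(f) + ∑_{k=1}^{l-1} C(l,k) (∑_{J ∈ J_k} w'_{J,k} D_J f)(∑_{J ∈ J_{l-k}} w'_{J,l-k} D_J f), where J_k = {(j₁,…,j_k) : ∑ i j_i = k} and w'_{J,k} = k!/(2!^{j₂}⋯k!^{j_k} j₁!⋯j_k!). -/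
/-- The finite set of multi-indices `(j₁,…,j_m) ∈ ℕ^m` with `∑_{i=1}^m i·j_i = t`
(here `j i` encodes `j_{i+1}`). -/
noncomputable def multiIdx (m t : ℕ) : Finset (Fin m → ℕ) :=
  Finset.filter (fun j => ∑ i, (i.1 + 1) * j i = t)
    (Fintype.piFinset fun _ : Fin m => Finset.range (t + 1))

/-- The ordered operator `D_J = δ₁^{j₁} ∘ δ₂^{j₂} ∘ ⋯ ∘ δ_m^{j_m}` applied to `f`
(with `δ₁` outermost). -/
noncomputable def Dapp {A : Type*} [CommRing A] [Algebra ℚ A]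
    (δ : ℕ → Derivation ℚ A A) (m : ℕ) (j : Fin m → ℕ) (f : A) : A :=
  (List.finRange m).foldr (fun i acc => (⇑(δ i.1))^[j i] acc) f

/-- The weight denominator `1!^{j₁} 2!^{j₂} ⋯ m!^{j_m} · j₁! ⋯ j_m!`. -/
noncomputable def wdenom (m : ℕ) (j : Fin m → ℕ) : ℚ :=
  ∏ i : Fin m, (Nat.factorial (i.1 + 1) ^ j i * Nat.factorial (j i) : ℚ)

/-!
Write `W_t f = ∑_{J ∈ J_t} (t! / wdenom J) D_J f` (`weightedDapp`, with `J` ranging over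
multi-indices of a fixed length `m`). The multivariate Leibniz rule for `D_J`, together with the
factorisation `(t! / wdenom J) ∏ᵢ C(jᵢ, rᵢ) = C(t, k) (k! / wdenom R) ((t - k)! / wdenom (J - R))`
where `k = ∑ i·rᵢ`, shows that `(W_t)_t` obeys the Leibniz rule of a higher derivation:
`W_t (f g) = ∑_k C(t, k) W_k f W_{t-k} g`. Identity (A.3) is this rule for `f = g`: the inner
terms only involve `δ₁, …, δ_k`, and allowing the derivation `δ_l` adds exactly `δ_l` to `W_l`,
whose contributions on both sides cancel by the Leibniz rule for `δ_l`.
-/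

open Finset

theorem Derivation.iterate_map_mul {R A : Type*} [CommSemiring R] [CommSemiring A] [Algebra R A]
    (D : Derivation R A A) (n : ℕ) (a b : A) :
    D^[n] (a * b) = ∑ ij ∈ antidiagonal n, n.choose ij.1 • (D^[ij.1] a * D^[ij.2] b) := by
  induction n with
  | zero => simp
  | succ n ih =>
    rw [sum_antidiagonal_choose_succ_nsmul (fun i j => D^[i] a * D^[j] b) n]
    simp only [Function.iterate_succ_apply', ih, map_sum, map_nsmul, Derivation.leibniz,
      smul_eq_mul, nsmul_add, sum_add_distrib]
    refine congrArg₂ (· + ·) rfl (sum_congr rfl fun ⟨i, j⟩ hij => ?_)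
    rw [n.choose_symm_of_eq_add (mem_antidiagonal.1 hij).symm, mul_comm]

theorem Derivation.iterate_map_sum {R A ι : Type*} [CommSemiring R] [CommSemiring A] [Algebra R A]
    (D : Derivation R A A) (n : ℕ) (s : Finset ι) (F : ι → A) :
    D^[n] (∑ x ∈ s, F x) = ∑ x ∈ s, D^[n] (F x) := by
  simp only [← D.coeFn_coe, ← Module.End.coe_pow, map_sum]

theorem Derivation.iterate_map_nsmul {R A : Type*} [CommSemiring R] [CommSemiring A] [Algebra R A]
    (D : Derivation R A A) (n c : ℕ) (a : A) : D^[n] (c • a) = c • D^[n] a := by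
  simp only [← D.coeFn_coe, ← Module.End.coe_pow, map_nsmul]

theorem Fin.sum_Iic_succ {M : Type*} [AddCommMonoid M] {m : ℕ} (j : Fin (m + 1) → ℕ)
    (F : (Fin (m + 1) → ℕ) → M) :
    ∑ r ∈ Iic j, F r = ∑ a ∈ Iic (j 0), ∑ r ∈ Iic (Fin.tail j), F (Fin.cons a r) := by
  rw [← sum_product']
  refine sum_nbij' (fun r => (r 0, Fin.tail r)) (fun p => Fin.cons p.1 p.2) ?_ ?_ ?_ ?_ ?_ <;>
    simp [Pi.le_def, Fin.forall_fin_succ, Fin.tail]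

def multiIdxWeight {m : ℕ} (j : Fin m → ℕ) : ℕ := ∑ i, (i.1 + 1) * j i

theorem multiIdxWeight_add {m : ℕ} (r s : Fin m → ℕ) :
    multiIdxWeight (r + s) = multiIdxWeight r + multiIdxWeight s := by
  simp only [multiIdxWeight, Pi.add_apply, mul_add, sum_add_distrib]

theorem multiIdxWeight_add_sub {m : ℕ} {r j : Fin m → ℕ} (h : r ≤ j) :
    multiIdxWeight r + multiIdxWeight (j - r) = multiIdxWeight j := by
  rw [← multiIdxWeight_add, add_tsub_cancel_of_le h]

theorem multiIdxWeight_snoc {m : ℕ} (j : Fin m → ℕ) (a : ℕ) :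
    multiIdxWeight (Fin.snoc j a : Fin (m + 1) → ℕ) = multiIdxWeight j + (m + 1) * a := by
  simp [multiIdxWeight, Fin.sum_univ_castSucc]

theorem multiIdxWeight_eq_init_add_last {m : ℕ} (j : Fin (m + 1) → ℕ) :
    multiIdxWeight j = multiIdxWeight (Fin.init j) + (m + 1) * j (Fin.last m) := by
  conv_lhs => rw [← Fin.snoc_init_self j]
  exact multiIdxWeight_snoc _ _

theorem multiIdxWeight_eq_zero_iff {m : ℕ} {j : Fin m → ℕ} : multiIdxWeight j = 0 ↔ j = 0 := by
  simp [multiIdxWeight, funext_iff]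

theorem mem_multiIdx {m t : ℕ} {j : Fin m → ℕ} : j ∈ multiIdx m t ↔ multiIdxWeight j = t := by
  refine mem_filter.trans ⟨And.right, fun h => ⟨Fintype.mem_piFinset.2 fun i => ?_, h⟩⟩
  rw [mem_range, Nat.lt_succ_iff, ← h]
  calc j i ≤ (i.1 + 1) * j i := Nat.le_mul_of_pos_left _ i.1.succ_pos
    _ ≤ multiIdxWeight j := single_le_sum (f := fun i => (i.1 + 1) * j i) (by simp) (mem_univ i)

theorem sum_range_sum_multiIdx_eq_sum_multiIdx_sum_Iic {M : Type*} [AddCommMonoid M] (m t : ℕ)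
    (F : ℕ → (Fin m → ℕ) → (Fin m → ℕ) → M) :
    ∑ k ∈ range (t + 1), ∑ r ∈ multiIdx m k, ∑ s ∈ multiIdx m (t - k), F k r s =
      ∑ j ∈ multiIdx m t, ∑ r ∈ Iic j, F (multiIdxWeight r) r (j - r) := by
  simp_rw [← sum_product']
  rw [sum_sigma', sum_sigma']
  refine sum_nbij' (fun q => ⟨q.2.1 + q.2.2, q.2.1⟩)
    (fun p => ⟨multiIdxWeight p.2, p.2, p.1 - p.2⟩) ?_ ?_ ?_ ?_ ?_
  · rintro ⟨k, r, s⟩ hq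
    simp only [mem_sigma, mem_product, mem_range, mem_multiIdx, mem_Iic,
      multiIdxWeight_add] at hq ⊢
    exact ⟨by omega, le_self_add⟩
  · rintro ⟨j, r⟩ hp
    simp only [mem_sigma, mem_product, mem_range, mem_multiIdx, mem_Iic] at hp ⊢
    have := multiIdxWeight_add_sub hp.2
    exact ⟨by omega, trivial, by omega⟩
  · rintro ⟨k, r, s⟩ hq
    simp only [mem_sigma, mem_product, mem_range, mem_multiIdx] at hq
    simp [hq.2.1]
  · rintro ⟨j, r⟩ hp
    simp only [mem_sigma, mem_Iic] at hp
    simp [add_tsub_cancel_of_le hp.2]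
  · rintro ⟨k, r, s⟩ hq
    simp only [mem_sigma, mem_product, mem_range, mem_multiIdx] at hq
    simp [hq.2.1]

theorem wdenom_ne_zero (m : ℕ) (j : Fin m → ℕ) : wdenom m j ≠ 0 :=
  prod_ne_zero_iff.2 fun i _ => by positivity

theorem wdenom_zero (m : ℕ) : wdenom m 0 = 1 := by
  simp [wdenom]

theorem wdenom_snoc (m : ℕ) (j : Fin m → ℕ) (a : ℕ) :
    wdenom (m + 1) (Fin.snoc j a) = wdenom m j * ((m + 1).factorial ^ a * a.factorial) := by
  simp [wdenom, Fin.prod_univ_castSucc]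

theorem wdenom_mul_wdenom_mul_prod_choose {m : ℕ} {r j : Fin m → ℕ} (h : r ≤ j) :
    wdenom m r * wdenom m (j - r) * ∏ i, ((j i).choose (r i) : ℚ) = wdenom m j := by
  simp only [wdenom, ← prod_mul_distrib]
  refine prod_congr rfl fun i _ => ?_
  have hfac : ((j i).choose (r i) * (r i).factorial * (j i - r i).factorial : ℚ) =
      (j i).factorial := by exact_mod_cast Nat.choose_mul_factorial_mul_factorial (h i)
  have hpow : ((i.1 + 1).factorial : ℚ) ^ j i =
      ((i.1 + 1).factorial : ℚ) ^ r i * ((i.1 + 1).factorial : ℚ) ^ (j i - r i) := by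
    rw [← pow_add, add_tsub_cancel_of_le (h i)]
  rw [Pi.sub_apply, ← hfac, hpow]
  ring

theorem factorial_div_wdenom_mul_prod_choose {m : ℕ} {r j : Fin m → ℕ} (h : r ≤ j) :
    ((multiIdxWeight j).factorial / wdenom m j) * ∏ i, ((j i).choose (r i) : ℚ) =
      (multiIdxWeight j).choose (multiIdxWeight r) *
        ((multiIdxWeight r).factorial / wdenom m r) *
        ((multiIdxWeight j - multiIdxWeight r).factorial / wdenom m (j - r)) := by
  have hle : multiIdxWeight r ≤ multiIdxWeight j :=
    multiIdxWeight_add_sub h ▸ Nat.le_add_right _ _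
  have hfac : ((multiIdxWeight j).choose (multiIdxWeight r) * (multiIdxWeight r).factorial *
      (multiIdxWeight j - multiIdxWeight r).factorial : ℚ) = (multiIdxWeight j).factorial := by
    exact_mod_cast Nat.choose_mul_factorial_mul_factorial hle
  have hr := wdenom_ne_zero m r
  have hs := wdenom_ne_zero m (j - r)
  have hc : ∏ i, ((j i).choose (r i) : ℚ) ≠ 0 :=
    prod_ne_zero_iff.2 fun i _ => Nat.cast_ne_zero.2 (Nat.choose_pos (h i)).ne'
  rw [← hfac, ← wdenom_mul_wdenom_mul_prod_choose h]
  field_simp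

section
variable {A : Type*} [CommRing A] [Algebra ℚ A] (δ : ℕ → Derivation ℚ A A)

theorem Dapp_succ (m : ℕ) (j : Fin (m + 1) → ℕ) (f : A) :
    Dapp δ (m + 1) j f = (δ 0)^[j 0] (Dapp (fun n => δ (n + 1)) m (Fin.tail j) f) := by
  rw [Dapp, List.finRange_succ, List.foldr_cons, List.foldr_map]
  rfl

theorem Dapp_snoc (m : ℕ) (j : Fin m → ℕ) (a : ℕ) (f : A) :
    Dapp δ (m + 1) (Fin.snoc j a) f = Dapp δ m j ((δ m)^[a] f) := by
  simp [Dapp, List.finRange_succ_last, List.foldr_map]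

theorem Dapp_zero (m : ℕ) (f : A) : Dapp δ m 0 f = f := by
  simp [Dapp]

theorem Dapp_mul (m : ℕ) (j : Fin m → ℕ) (f g : A) :
    Dapp δ m j (f * g) =
      ∑ r ∈ Iic j, (∏ i, (j i).choose (r i)) • (Dapp δ m r f * Dapp δ m (j - r) g) := by
  induction m generalizing δ with
  | zero =>
    simp [Dapp, Subsingleton.elim _ j, Pi.card_Iic]
  | succ m ih =>
    rw [Dapp_succ, ih, Derivation.iterate_map_sum, Fin.sum_Iic_succ, sum_comm]
    refine sum_congr rfl fun r _ => ?_
    rw [Derivation.iterate_map_nsmul, Derivation.iterate_map_mul,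
      Nat.sum_antidiagonal_eq_sum_range_succ_mk, Nat.range_succ_eq_Iic, smul_sum]
    refine sum_congr rfl fun a _ => ?_
    simp only [Dapp_succ, Fin.cons_zero, Fin.tail_cons, Fin.prod_univ_succ, smul_smul, mul_comm]
    rfl

noncomputable def weightedDapp (m t : ℕ) (f : A) : A :=
  ∑ j ∈ multiIdx m t, ((t.factorial : ℚ) / wdenom m j) • Dapp δ m j f

theorem weightedDapp_mul (m t : ℕ) (f g : A) :
    weightedDapp δ m t (f * g) = ∑ k ∈ range (t + 1),
      (t.choose k : ℚ) • (weightedDapp δ m k f * weightedDapp δ m (t - k) g) := by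
  simp only [weightedDapp, sum_mul_sum, smul_sum]
  rw [sum_range_sum_multiIdx_eq_sum_multiIdx_sum_Iic]
  refine sum_congr rfl fun j hj => ?_
  rw [mem_multiIdx] at hj
  subst hj
  simp only [Dapp_mul, smul_sum]
  refine sum_congr rfl fun r hr => ?_
  rw [← Nat.cast_smul_eq_nsmul ℚ, smul_smul, Nat.cast_prod,
    factorial_div_wdenom_mul_prod_choose (mem_Iic.1 hr), smul_mul_smul_comm, smul_smul, mul_assoc]

theorem weightedDapp_zero_right (m : ℕ) (f : A) : weightedDapp δ m 0 f = f := by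
  have hzero : multiIdx m 0 = {0} := by
    ext j
    simp [mem_multiIdx, multiIdxWeight_eq_zero_iff]
  simp [weightedDapp, hzero, Dapp_zero, wdenom_zero]

theorem weightedDapp_eq_sum_filter (m t : ℕ) (f : A) :
    weightedDapp δ m t f = ∑ j ∈ multiIdx (m + 1) t with j (Fin.last m) = 0,
      ((t.factorial : ℚ) / wdenom (m + 1) j) • Dapp δ (m + 1) j f := by
  refine sum_nbij' (fun j => Fin.snoc j 0) Fin.init ?_ ?_ ?_ ?_ ?_
  · intro j hj
    simpa [mem_multiIdx, multiIdxWeight_snoc] using hj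
  · intro j hj
    obtain ⟨hw, hlast⟩ := mem_filter.1 hj
    rw [mem_multiIdx, ← Fin.snoc_init_self j, hlast, multiIdxWeight_snoc] at hw
    simpa [mem_multiIdx] using hw
  · intro j _
    simp
  · intro j hj
    rw [← (mem_filter.1 hj).2]
    exact Fin.snoc_init_self j
  · intro j _
    simp [wdenom_snoc, Dapp_snoc]

theorem weightedDapp_succ_of_le {m t : ℕ} (h : t ≤ m) (f : A) :
    weightedDapp δ (m + 1) t f = weightedDapp δ m t f := by
  rw [weightedDapp_eq_sum_filter δ m, weightedDapp, filter_true_of_mem]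
  intro j hj
  rw [mem_multiIdx, multiIdxWeight_eq_init_add_last] at hj
  nlinarith

theorem weightedDapp_of_le {m t : ℕ} (h : t ≤ m) (f : A) :
    weightedDapp δ m t f = weightedDapp δ t t f := by
  induction m, h using Nat.le_induction with
  | base => rfl
  | succ m hm ih => rw [weightedDapp_succ_of_le δ hm, ih]

theorem weightedDapp_succ_self (m : ℕ) (f : A) :
    weightedDapp δ (m + 1) (m + 1) f = weightedDapp δ m (m + 1) f + δ m f := by
  have hlast : {j ∈ multiIdx (m + 1) (m + 1) | ¬j (Fin.last m) = 0} = {Fin.snoc 0 1} := by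
    ext j
    simp only [mem_filter, mem_multiIdx, mem_singleton]
    constructor
    · rintro ⟨hw, hj⟩
      rw [multiIdxWeight_eq_init_add_last] at hw
      have h1 : j (Fin.last m) = 1 := by
        have := Nat.pos_of_ne_zero hj
        nlinarith
      rw [h1, mul_one, add_eq_right, multiIdxWeight_eq_zero_iff] at hw
      rw [← Fin.snoc_init_self j, hw, h1]
    · rintro rfl
      simp [multiIdxWeight_snoc, multiIdxWeight_eq_zero_iff]
  rw [weightedDapp, ← sum_filter_add_sum_filter_not _ fun j => j (Fin.last m) = 0,
    ← weightedDapp_eq_sum_filter, hlast, sum_singleton, wdenom_snoc, wdenom_zero, Dapp_snoc,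
    Dapp_zero]
  simp [Nat.factorial_ne_zero]

end

/-- Equation (A.3) of the Appendix: the combinatorial identity, for derivations
`δ₁, …, δ_{l-1}` of a commutative ℚ-algebra, relating the weighted sums of
`D_J(f²)` over `J'_l` to those of `D_J f` over `J_k` and `J_{l-k}`. -/
theorem appendix_combinatorial_identity {A : Type*} [CommRing A] [Algebra ℚ A]
    (l : ℕ) (hl : 1 ≤ l) (δ : ℕ → Derivation ℚ A A) (f : A) :
    (∑ j ∈ multiIdx (l - 1) l,
        ((Nat.factorial l : ℚ) / wdenom (l - 1) j) • Dapp δ (l - 1) j (f ^ 2)) =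
    2 * f * (∑ j ∈ multiIdx (l - 1) l,
        ((Nat.factorial l : ℚ) / wdenom (l - 1) j) • Dapp δ (l - 1) j f) +
    ∑ k ∈ Finset.Ico 1 l, (l.choose k : ℚ) •
      ((∑ j ∈ multiIdx k k,
          ((Nat.factorial k : ℚ) / wdenom k j) • Dapp δ k j f) *
       (∑ j ∈ multiIdx (l - k) (l - k),
          ((Nat.factorial (l - k) : ℚ) / wdenom (l - k) j) • Dapp δ (l - k) j f)) := by
  obtain ⟨m, rfl⟩ : ∃ m, l = m + 1 := ⟨l - 1, by omega⟩
  rw [Nat.add_sub_cancel]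
  change weightedDapp δ m (m + 1) (f ^ 2) =
    2 * f * weightedDapp δ m (m + 1) f + ∑ k ∈ Ico 1 (m + 1),
      ((m + 1).choose k : ℚ) • (weightedDapp δ k k f * weightedDapp δ (m + 1 - k) (m + 1 - k) f)
  have hsq := weightedDapp_mul δ (m + 1) (m + 1) f f
  rw [sum_range_succ, sum_range_eq_add_Ico _ (Nat.succ_pos m)] at hsq
  have hmid : ∀ k ∈ Ico 1 (m + 1), ((m + 1).choose k : ℚ) •
      (weightedDapp δ (m + 1) k f * weightedDapp δ (m + 1) (m + 1 - k) f) =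
      ((m + 1).choose k : ℚ) • (weightedDapp δ k k f * weightedDapp δ (m + 1 - k) (m + 1 - k) f) :=
    fun k hk => by
      rw [mem_Ico] at hk
      rw [weightedDapp_of_le δ (by omega), weightedDapp_of_le δ (m := m + 1) (by omega)]
  simp only [sum_congr rfl hmid, weightedDapp_zero_right, weightedDapp_succ_self, Nat.sub_zero,
    Nat.sub_self, Nat.choose_zero_right, Nat.choose_self, Nat.cast_one, one_smul] at hsq
  have hleib : δ m (f * f) = 2 * f * δ m f := by
    rw [Derivation.leibniz, smul_eq_mul]
    ring
  rw [pow_two]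
  linear_combination hsq - hleib
end

section
/- Second-order generator of an arbitrary family of diffeomorphisms: with Φ as above (C² in λ), define L₂ f := (d²/dλ²)|₀ f(Φ(λ,·)) − L₁² f, where L₁ f = ξ₁ f' with ξ₁(x) = ∂₁Φ(0,x). Then L₂ satisfies L₂(f²) = 2 f L₂(f) for all smooth f, hence L₂ is a derivation; explicitly L₂ f = ξ₂ f' with ξ₂(x) = ∂₁²Φ(0,x) − ξ₁(x) ξ₁'(x). -/
/-- The first generator `ξ₁(x) = ∂₁Φ(0,x)` of a family of diffeomorphisms. -/
noncomputable def xi1 (Φ : ℝ → ℝ → ℝ) : ℝ → ℝ :=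
  fun x => deriv (fun lam => Φ lam x) 0

/-- The first-order operator: `L₁ f = ξ₁ · f'`. -/
noncomputable def L1 (Φ : ℝ → ℝ → ℝ) (f : ℝ → ℝ) : ℝ → ℝ :=
  fun x => xi1 Φ x * deriv f x

/-- The second-order operator of the recursion (4.3):
`L₂ f (x) = (d²/dλ²)|₀ f(Φ(λ,x)) − L₁²f (x)`. -/
noncomputable def L2 (Φ : ℝ → ℝ → ℝ) (f : ℝ → ℝ) : ℝ → ℝ :=
  fun x => iteratedDeriv 2 (fun lam => f (Φ lam x)) 0 - L1 Φ (L1 Φ f) x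

/-- The second generator `ξ₂(x) = ∂₁²Φ(0,x) − ξ₁(x) ξ₁'(x)`. -/
noncomputable def xi2 (Φ : ℝ → ℝ → ℝ) : ℝ → ℝ :=
  fun x => iteratedDeriv 2 (fun lam => Φ lam x) 0 - xi1 Φ x * deriv (xi1 Φ) x

section Aux

variable (Φ : ℝ → ℝ → ℝ)

lemma aux_g_contDiff (hΦ : ContDiff ℝ 2 (Function.uncurry Φ)) (x : ℝ) :
    ContDiff ℝ 2 (fun lam => Φ lam x) :=
  hΦ.comp (contDiff_id.prodMk contDiff_const)

lemma aux_xi1_contDiff (hΦ : ContDiff ℝ 2 (Function.uncurry Φ)) :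
    ContDiff ℝ 1 (xi1 Φ) := by
  have h1 : ContDiff ℝ 2 (Function.uncurry fun y lam => Φ lam y) :=
    hΦ.comp (contDiff_snd.prodMk contDiff_fst)
  have h2 : ContDiff ℝ 1 (fun y => fderiv ℝ (fun lam => Φ lam y) (0 : ℝ) (1 : ℝ)) := by
    apply ContDiff.fderiv_apply h1 contDiff_const contDiff_const
    norm_num
  have : xi1 Φ = fun y => fderiv ℝ (fun lam => Φ lam y) (0 : ℝ) (1 : ℝ) := by
    funext y
    exact (fderiv_apply_one_eq_deriv).symm
  rw [this]
  exact h2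

/-- The key chain-rule computation. -/
lemma aux_L2_eq (hΦ : ContDiff ℝ 2 (Function.uncurry Φ)) (hΦ0 : ∀ x, Φ 0 x = x)
    (f : ℝ → ℝ) (hf : ContDiff ℝ (⊤ : ℕ∞) f) (x : ℝ) :
    L2 Φ f x = xi2 Φ x * deriv f x := by
  set g : ℝ → ℝ := fun lam => Φ lam x with hg
  have hgC : ContDiff ℝ 2 g := aux_g_contDiff Φ hΦ x
  have hgd : Differentiable ℝ g := hgC.differentiable (by norm_num)
  have hg'C : ContDiff ℝ 1 (deriv g) := by
    have := (contDiff_succ_iff_deriv (n := 1)).mp (by exact_mod_cast hgC)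
    exact this.2.2
  have hfd : Differentiable ℝ f := hf.differentiable (by simp)
  have hf'C : ContDiff ℝ (⊤ : ℕ∞) (deriv f) := by
    have := (contDiff_succ_iff_deriv (n := (⊤ : ℕ∞))).mp (by
      have : (((⊤ : ℕ∞) : WithTop ℕ∞) + 1) = ((⊤ : ℕ∞) : WithTop ℕ∞) := by rfl
      rw [this]; exact hf)
    exact this.2.2
  have hf'd : Differentiable ℝ (deriv f) := hf'C.differentiable (by simp)
  have hg0 : g 0 = x := hΦ0 x
  -- first derivative of f ∘ g
  have hd1 : deriv (fun lam => f (g lam)) = fun lam => deriv f (g lam) * deriv g lam := by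
    funext lam
    exact deriv_comp lam (hfd _) (hgd _)
  -- second derivative
  have hdg1 : DifferentiableAt ℝ (fun lam => deriv f (g lam)) 0 :=
    (hf'd (g 0)).comp 0 (hgd 0)
  have hdg2 : DifferentiableAt ℝ (deriv g) 0 :=
    (hg'C.differentiable (by norm_num)) 0
  have hd2 : iteratedDeriv 2 (fun lam => f (Φ lam x)) 0
      = deriv (deriv f) x * (xi1 Φ x * xi1 Φ x) + deriv f x * iteratedDeriv 2 g 0 := by
    have e1 : (fun lam => f (Φ lam x)) = fun lam => f (g lam) := rfl
    rw [e1, iteratedDeriv_succ, iteratedDeriv_one, hd1, deriv_fun_mul hdg1 hdg2]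
    have e2 : deriv (fun lam => deriv f (g lam)) 0 = deriv (deriv f) (g 0) * deriv g 0 :=
      deriv_comp 0 (hf'd _) (hgd 0)
    have e3 : iteratedDeriv 2 g 0 = deriv (deriv g) 0 := by
      rw [iteratedDeriv_succ, iteratedDeriv_one]
    have e4 : deriv g 0 = xi1 Φ x := rfl
    rw [e2, e3, e4, hg0]
    ring
  -- the L1 ∘ L1 term
  have hxi1C : ContDiff ℝ 1 (xi1 Φ) := aux_xi1_contDiff Φ hΦ
  have hL : L1 Φ (L1 Φ f) x
      = xi1 Φ x * (deriv (xi1 Φ) x * deriv f x + xi1 Φ x * deriv (deriv f) x) := by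
    have : L1 Φ f = fun y => xi1 Φ y * deriv f y := rfl
    simp only [L1, this]
    rw [deriv_fun_mul ((hxi1C.differentiable (by norm_num)) x) (hf'd x)]
  simp only [L2, hd2, hL, xi2]
  ring

end Aux

/-- For a `C²` one-parameter family of diffeomorphisms `Φ` of ℝ with `Φ₀ = id`,
the operator `L₂` satisfies the square rule `L₂(f²) = 2 f L₂ f` (hence is a
derivation), and explicitly `L₂ f = ξ₂ · f'` with `ξ₂ = ∂₁²Φ(0,·) − ξ₁ ξ₁'`. -/
theorem second_order_generator (Φ : ℝ → ℝ → ℝ)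
    (hΦ : ContDiff ℝ 2 (Function.uncurry Φ))
    (hΦ0 : ∀ x, Φ 0 x = x)
    (hdiffeo : ∀ lam, Function.Bijective (Φ lam)) :
    (∀ f : ℝ → ℝ, ContDiff ℝ (⊤ : ℕ∞) f → ∀ x,
        L2 Φ (fun y => f y * f y) x = 2 * f x * L2 Φ f x) ∧
    (∀ f : ℝ → ℝ, ContDiff ℝ (⊤ : ℕ∞) f → ∀ x,
        L2 Φ f x = xi2 Φ x * deriv f x) := by
  have key := aux_L2_eq Φ hΦ hΦ0
  refine ⟨fun f hf x => ?_, key⟩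
  rw [key f hf x, key _ (hf.mul hf) x]
  have hfd : Differentiable ℝ f := hf.differentiable (by simp)
  rw [deriv_fun_mul (hfd x) (hfd x)]
  ring
end

section
/- Knights fail the group law: let ξ₁, ξ₂ be the constant and linear vector fields on ℝ given by ξ₁(x) = 1 and ξ₂(x) = x, with flows φ¹_t(x) = x + t and φ²_t(x) = e^t x. Define Ψ_λ := φ²_{λ²/2} ∘ φ¹_λ. Then there exist σ, λ such that for no τ ∈ ℝ does Ψ_σ ∘ Ψ_λ = Ψ_τ hold (as functions ℝ → ℝ); in particular the family {Ψ_λ} is not a one-parameter group. -/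
/-- The rank-2 knight on ℝ generated by `ξ₁ = ∂ₓ` (flow `φ¹_t(x) = x + t`) and
`ξ₂ = x ∂ₓ` (flow `φ²_t(x) = eᵗ x`): `Ψ_λ = φ²_{λ²/2} ∘ φ¹_λ`, i.e.
`Ψ_λ(x) = e^{λ²/2}(x + λ)`. -/
noncomputable def knightExample (lam x : ℝ) : ℝ :=
  Real.exp (lam ^ 2 / 2) * (x + lam)

/-- Knights fail the group law: for the rank-2 knight generated by the
non-collinear fields `ξ₁(x) = 1` and `ξ₂(x) = x`, there exist `σ, λ` such that
`Ψ_σ ∘ Ψ_λ` is not equal to `Ψ_τ` for any `τ`; in particular the family `{Ψ_λ}`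
is not a one-parameter group. -/
theorem knight_not_a_group :
    ∃ σ lam : ℝ, ∀ τ : ℝ, ∃ x : ℝ,
      knightExample σ (knightExample lam x) ≠ knightExample τ x := by
  refine ⟨1, 1, fun τ => ?_⟩
  by_contra h
  push_neg at h
  have h0 := h 0
  have h1 := h 1
  unfold knightExample at h0 h1
  norm_num at h0 h1
  set a := Real.exp (1 / 2) with ha
  set b := Real.exp (τ ^ 2 / 2) with hb
  have hapos : 0 < a := Real.exp_pos _
  have hbpos : 0 < b := Real.exp_pos _
  -- h0 : a * (a + 1) = b * τ, h1 : a * (a * 2 + 1) = b * (1 + τ)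
  have hba : b = a * a := by nlinarith [h0, h1]
  have haa : a * a = Real.exp 1 := by
    rw [ha, ← Real.exp_add]; norm_num
  have hτ2 : τ ^ 2 = 2 := by
    have : Real.exp (τ ^ 2 / 2) = Real.exp 1 := by rw [← hb, hba, haa]
    have := Real.exp_injective this
    linarith
  have haτ : a * τ = a + 1 := by
    have h2 : a * (a * τ) = a * (a + 1) := by rw [← mul_assoc, ← hba, ← h0]
    exact mul_left_cancel₀ (ne_of_gt hapos) h2
  have helt : Real.exp 1 < 2.7182818286 := Real.exp_one_lt_d9
  nlinarith [sq_nonneg (a - 1), sq_nonneg a, haτ, hτ2, haa, helt, hapos,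
    mul_self_nonneg (a * τ - a - 1)]
end

section
/- Faà di Bruno for reparametrised flows: let φ be the flow of a smooth complete vector field ξ on ℝ, f : ℝ → ℝ smooth, and g(λ) := ∑_{i=1}^k α_i λ^i / i! a polynomial with g(0)=0. Then for 0 ≤ l ≤ k, the l-th derivative at λ = 0 of λ ↦ f(φ(g(λ), x)) equals l! ∑_{(j₁,…,j_l): ∑ i j_i = l} (∏_{i=1}^l α_i^{j_i}/(i!^{j_i} j_i!)) (L_ξ^{j₁+⋯+j_l} f)(x), where L_ξ f = ξ f'. -/
/-- Lie derivative of a function along a vector field on ℝ: `L_ξ f = ξ · f'`. -/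
noncomputable def lieDeriv (ξ : ℝ → ℝ) (f : ℝ → ℝ) : ℝ → ℝ := fun x => ξ x * deriv f x

open Polynomial Finset
open scoped ContDiff

namespace FaaDiBrunoAux

lemma natle (n : ℕ) : ((n : WithTop ℕ∞)) ≤ ∞ := by exact_mod_cast (le_top : (n:ℕ∞) ≤ ⊤)
lemma onele : (1 : WithTop ℕ∞) ≤ ∞ := by exact_mod_cast (le_top : (1:ℕ∞) ≤ ⊤)

lemma contDiff_poly (p : ℝ[X]) : ContDiff ℝ ∞ fun x : ℝ => p.eval x := by
  induction p using Polynomial.induction_on' with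
  | add p q hp hq => simpa using hp.add hq
  | monomial n a =>
    simpa [Polynomial.eval_monomial] using (contDiff_const (c := a)).mul (contDiff_id.pow n)

lemma iteratedDeriv_poly (n : ℕ) (p : ℝ[X]) :
    iteratedDeriv n (fun y : ℝ => p.eval y) = fun y => (derivative^[n] p).eval y := by
  induction n generalizing p with
  | zero => simp
  | succ n ih =>
    rw [iteratedDeriv_succ']
    have h : deriv (fun y : ℝ => p.eval y) = fun y => p.derivative.eval y := by
      funext y; exact Polynomial.deriv (p := p)
    rw [h, ih]
    funext y
    rw [Function.iterate_succ_apply]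

lemma iteratedDeriv_poly_zero (n : ℕ) (p : ℝ[X]) :
    iteratedDeriv n (fun y : ℝ => p.eval y) 0 = (n.factorial : ℝ) * p.coeff n := by
  rw [iteratedDeriv_poly]
  simp [← Polynomial.coeff_zero_eq_eval_zero, Polynomial.coeff_iterate_derivative,
    Nat.descFactorial_self, nsmul_eq_mul]

lemma itd_add {n : ℕ} {F G : ℝ → ℝ} (hF : ContDiff ℝ ∞ F) (hG : ContDiff ℝ ∞ G) (x : ℝ) :
    iteratedDeriv n (fun y => F y + G y) x = iteratedDeriv n F x + iteratedDeriv n G x := by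
  have h := iteratedDerivWithin_add (Set.mem_univ x) uniqueDiffOn_univ
    ((hF.of_le (natle n)).contDiffWithinAt) ((hG.of_le (natle n)).contDiffWithinAt)
  simpa [iteratedDerivWithin_univ, Pi.add_def] using h

lemma itd_sub {n : ℕ} {F G : ℝ → ℝ} (hF : ContDiff ℝ ∞ F) (hG : ContDiff ℝ ∞ G) (x : ℝ) :
    iteratedDeriv n (fun y => F y - G y) x = iteratedDeriv n F x - iteratedDeriv n G x := by
  have h := iteratedDerivWithin_sub (Set.mem_univ x) uniqueDiffOn_univ
    ((hF.of_le (natle n)).contDiffWithinAt) ((hG.of_le (natle n)).contDiffWithinAt)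
  simpa [iteratedDerivWithin_univ, Pi.sub_def] using h
lemma vanish_mul : ∀ (l : ℕ) (F G : ℝ → ℝ), ContDiff ℝ ∞ F → ContDiff ℝ ∞ G →
    (∀ m ≤ l, iteratedDeriv m F 0 = 0) → ∀ m ≤ l, iteratedDeriv m (fun y => F y * G y) 0 = 0 := by
  intro l
  induction l with
  | zero =>
    intro F G hF hG hv m hm
    simp only [Nat.le_zero] at hm; subst hm
    have h0 := hv 0 le_rfl
    simp only [iteratedDeriv_zero] at h0 ⊢
    rw [h0, zero_mul]
  | succ l ih =>
    intro F G hF hG hv m hm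
    match m, hm with
    | 0, _ =>
      have h0 := hv 0 (Nat.zero_le _)
      simp only [iteratedDeriv_zero] at h0 ⊢
      rw [h0, zero_mul]
    | (m+1), hm =>
      have hm' : m ≤ l := Nat.succ_le_succ_iff.mp hm
      rw [iteratedDeriv_succ']
      have hF' : ContDiff ℝ ∞ (deriv F) := (contDiff_infty_iff_deriv.mp hF).2
      have hG' : ContDiff ℝ ∞ (deriv G) := (contDiff_infty_iff_deriv.mp hG).2
      have hder : deriv (fun y => F y * G y) = fun y => deriv F y * G y + F y * deriv G y := by
        funext y
        exact deriv_fun_mul ((hF.differentiable (by simp)) y) ((hG.differentiable (by simp)) y)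
      rw [hder, itd_add ((hF'.mul hG)) (hF.mul hG') 0]
      have h1 : iteratedDeriv m (fun y => deriv F y * G y) 0 = 0 := by
        refine ih _ _ hF' hG (fun m' hm'' => ?_) m hm'
        rw [show iteratedDeriv m' (deriv F) = iteratedDeriv (m'+1) F from (iteratedDeriv_succ').symm]
        exact hv (m'+1) (Nat.succ_le_succ hm'')
      have h2 : iteratedDeriv m (fun y => F y * deriv G y) 0 = 0 :=
        ih _ _ hF hG' (fun m' hm'' => hv m' (le_trans hm'' (Nat.le_succ _))) m hm'
      rw [h1, h2, add_zero]

lemma vanish_comp : ∀ (l : ℕ) (R g : ℝ → ℝ), ContDiff ℝ ∞ R → ContDiff ℝ ∞ g → g 0 = 0 →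
    (∀ m ≤ l, iteratedDeriv m R 0 = 0) → ∀ m ≤ l, iteratedDeriv m (fun y => R (g y)) 0 = 0 := by
  intro l
  induction l with
  | zero =>
    intro R g hR hg hg0 hv m hm
    simp only [Nat.le_zero] at hm; subst hm
    have h0 := hv 0 le_rfl
    simp only [iteratedDeriv_zero] at h0 ⊢
    rw [hg0, h0]
  | succ l ih =>
    intro R g hR hg hg0 hv m hm
    match m, hm with
    | 0, _ =>
      have h0 := hv 0 (Nat.zero_le _)
      simp only [iteratedDeriv_zero] at h0 ⊢
      rw [hg0, h0]
    | (m+1), hm =>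
      have hm' : m ≤ l := Nat.succ_le_succ_iff.mp hm
      rw [iteratedDeriv_succ']
      have hR' : ContDiff ℝ ∞ (deriv R) := (contDiff_infty_iff_deriv.mp hR).2
      have hg' : ContDiff ℝ ∞ (deriv g) := (contDiff_infty_iff_deriv.mp hg).2
      have hder : deriv (fun y => R (g y)) = fun y => deriv R (g y) * deriv g y := by
        funext y
        have h1 : HasDerivAt R (deriv R (g y)) (g y) := ((hR.differentiable (by simp)) (g y)).hasDerivAt
        have h2 : HasDerivAt g (deriv g y) y := ((hg.differentiable (by simp)) y).hasDerivAt
        exact (h1.comp y h2).deriv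
      rw [hder]
      refine vanish_mul l (fun y => deriv R (g y)) (deriv g) (hR'.comp hg) hg'
        (fun m' hm'' => ?_) m hm'
      refine ih (deriv R) g hR' hg hg0 (fun m'' hm''' => ?_) m' hm''
      rw [show iteratedDeriv m'' (deriv R) = iteratedDeriv (m''+1) R from (iteratedDeriv_succ').symm]
      exact hv (m''+1) (Nat.succ_le_succ hm''')
variable {ξ : ℝ → ℝ} {φ : ℝ → ℝ → ℝ}

lemma flow_contDiff (hξ : ContDiff ℝ ∞ ξ)
    (hflow : ∀ t x, HasDerivAt (fun s => φ s x) (ξ (φ t x)) t) (x : ℝ) :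
    ContDiff ℝ ∞ (fun t => φ t x) := by
  have hdiff : Differentiable ℝ (fun t => φ t x) := fun t => (hflow t x).differentiableAt
  have hder : deriv (fun t => φ t x) = fun t => ξ (φ t x) := by
    funext t; exact (hflow t x).deriv
  have key : ∀ n : ℕ, ContDiff ℝ n (fun t => φ t x) := by
    intro n
    induction n with
    | zero => exact contDiff_zero.mpr hdiff.continuous
    | succ n ih =>
      rw [show ((n+1 : ℕ) : WithTop ℕ∞) = (n : WithTop ℕ∞) + 1 by push_cast; ring]
      refine contDiff_succ_iff_deriv.mpr ⟨hdiff, ?_, ?_⟩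
      · intro h; exact absurd h (by exact_mod_cast WithTop.natCast_ne_top n)
      · rw [hder]
        exact (hξ.of_le (by exact_mod_cast (le_top : (n:ℕ∞) ≤ ⊤))).comp ih
  exact contDiff_infty.mpr key

lemma lieDeriv_contDiff (hξ : ContDiff ℝ ∞ ξ) {ψ : ℝ → ℝ} (hψ : ContDiff ℝ ∞ ψ) :
    ContDiff ℝ ∞ (lieDeriv ξ ψ) :=
  hξ.mul (contDiff_infty_iff_deriv.mp hψ).2

lemma lieDeriv_iter_contDiff (hξ : ContDiff ℝ ∞ ξ) {ψ : ℝ → ℝ} (hψ : ContDiff ℝ ∞ ψ) (n : ℕ) :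
    ContDiff ℝ ∞ ((lieDeriv ξ)^[n] ψ) := by
  induction n generalizing ψ with
  | zero => exact hψ
  | succ n ih => rw [Function.iterate_succ_apply]; exact ih (lieDeriv_contDiff hξ hψ)

lemma itd_flow (hξ : ContDiff ℝ ∞ ξ)
    (hflow : ∀ t x, HasDerivAt (fun s => φ s x) (ξ (φ t x)) t) (x : ℝ) :
    ∀ (n : ℕ) (ψ : ℝ → ℝ), ContDiff ℝ ∞ ψ →
      iteratedDeriv n (fun t => ψ (φ t x)) = fun t => ((lieDeriv ξ)^[n] ψ) (φ t x) := by
  intro n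
  induction n with
  | zero => intro ψ _; simp
  | succ n ih =>
    intro ψ hψ
    rw [iteratedDeriv_succ']
    have hder : deriv (fun t => ψ (φ t x)) = fun t => (lieDeriv ξ ψ) (φ t x) := by
      funext t
      have h1 : HasDerivAt ψ (deriv ψ (φ t x)) (φ t x) :=
        ((hψ.differentiable (by simp)) (φ t x)).hasDerivAt
      have h2 : HasDerivAt (fun t => ψ (φ t x)) (deriv ψ (φ t x) * ξ (φ t x)) t :=
        h1.comp t (hflow t x)
      rw [h2.deriv]; simp [lieDeriv, mul_comm]
    rw [hder, ih _ (lieDeriv_contDiff hξ hψ)]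
    funext t
    rw [Function.iterate_succ_apply]
lemma jet_comp (h : ℝ → ℝ) (hh : ContDiff ℝ ∞ h) (G : ℝ[X]) (hG0 : G.coeff 0 = 0) (l : ℕ) :
    iteratedDeriv l (fun lam : ℝ => h (G.eval lam)) 0 =
      (l.factorial : ℝ) *
        ((∑ m ∈ range (l+1), C (iteratedDeriv m h 0 / (m.factorial : ℝ)) * X ^ m).comp G).coeff l := by
  set P : ℝ[X] := ∑ m ∈ range (l+1), C (iteratedDeriv m h 0 / (m.factorial : ℝ)) * X ^ m with hP
  have hPcoeff : ∀ m ≤ l, P.coeff m = iteratedDeriv m h 0 / (m.factorial : ℝ) := by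
    intro m hm
    rw [hP, finset_sum_coeff]
    rw [Finset.sum_eq_single m]
    · simp
    · intro b _ hbm
      simp [coeff_C_mul, coeff_X_pow, Ne.symm hbm]
    · intro hmem; exact absurd (mem_range.mpr (Nat.lt_succ_of_le hm)) hmem
  have hT : ContDiff ℝ ∞ (fun t : ℝ => P.eval t) := contDiff_poly P
  have hTd : ∀ m ≤ l, iteratedDeriv m (fun t : ℝ => P.eval t) 0 = iteratedDeriv m h 0 := by
    intro m hm
    rw [iteratedDeriv_poly_zero, hPcoeff m hm, mul_div_cancel₀]
    exact_mod_cast (Nat.factorial_pos m).ne'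
  have hR : ContDiff ℝ ∞ (fun t => h t - P.eval t) := hh.sub hT
  have hRv : ∀ m ≤ l, iteratedDeriv m (fun t => h t - P.eval t) 0 = 0 := by
    intro m hm
    rw [itd_sub hh hT, hTd m hm, sub_self]
  have hgs : ContDiff ℝ ∞ (fun lam : ℝ => G.eval lam) := contDiff_poly G
  have hg0 : G.eval (0:ℝ) = 0 := by rw [← Polynomial.coeff_zero_eq_eval_zero, hG0]
  have hsplit : (fun lam : ℝ => h (G.eval lam)) =
      fun lam : ℝ => P.eval (G.eval lam) + (fun t => h t - P.eval t) (G.eval lam) := by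
    funext lam; ring
  rw [hsplit,
    itd_add (by exact hT.comp hgs) (by exact hR.comp hgs) 0,
    vanish_comp l _ _ hR hgs hg0 hRv l le_rfl, add_zero]
  have : (fun lam : ℝ => P.eval (G.eval lam)) = fun lam : ℝ => (P.comp G).eval lam := by
    funext lam; rw [Polynomial.eval_comp]
  rw [this, iteratedDeriv_poly_zero]
lemma transfer_sum {M : Type*} [AddCommMonoid M] {k l : ℕ} (hl : l ≤ k) (j : ℕ → ℕ)
    (hz : ∀ i, j i ≠ 0 → i < l) (F : ℕ → ℕ → M) (hF0 : ∀ i, F i 0 = 0) :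
    ∑ i ∈ range k, F i (j i) = ∑ i : Fin l, F i.1 (j i.1) := by
  rw [Fin.sum_univ_eq_sum_range (fun i => F i (j i)) l]
  refine (Finset.sum_subset (range_subset_range.mpr hl) (fun i _ hil => ?_)).symm
  have hj : j i = 0 := by
    by_contra h
    exact hil (mem_range.mpr (hz i h))
  rw [hj, hF0]

lemma transfer_prod {M : Type*} [CommMonoid M] {k l : ℕ} (hl : l ≤ k) (j : ℕ → ℕ)
    (hz : ∀ i, j i ≠ 0 → i < l) (F : ℕ → ℕ → M) (hF1 : ∀ i, F i 0 = 1) :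
    ∏ i ∈ range k, F i (j i) = ∏ i : Fin l, F i.1 (j i.1) := by
  rw [Fin.prod_univ_eq_prod_range (fun i => F i (j i)) l]
  refine (Finset.prod_subset (range_subset_range.mpr hl) (fun i _ hil => ?_)).symm
  have hj : j i = 0 := by
    by_contra h
    exact hil (mem_range.mpr (hz i h))
  rw [hj, hF1]

lemma support_lt {k l : ℕ} {j : ℕ → ℕ} (hsupp : ∀ i, j i ≠ 0 → i ∈ range k)
    (hcond : ∑ i ∈ range k, (i + 1) * j i = l) : ∀ i, j i ≠ 0 → i < l := by
  intro i hi
  have hik := hsupp i hi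
  have h1 : (i + 1) * j i ≤ ∑ i ∈ range k, (i + 1) * j i :=
    single_le_sum (f := fun i => (i + 1) * j i) (fun _ _ => Nat.zero_le _) hik
  rw [hcond] at h1
  have h2 : i + 1 ≤ (i + 1) * j i := Nat.le_mul_of_pos_right _ (Nat.pos_of_ne_zero hi)
  omega

lemma coeff_comp (k l : ℕ) (hl : l ≤ k) (a c : ℕ → ℝ) :
    ((∑ m ∈ range (l + 1), C (c m / (m.factorial : ℝ)) * X ^ m).comp
      (∑ i ∈ range k, C (a i) * X ^ (i + 1))).coeff l
    = ∑ j ∈ (Fintype.piFinset fun _ : Fin l => range (l + 1)).filter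
        (fun j : Fin l → ℕ => ∑ i, (i.1 + 1) * j i = l),
        (∏ i : Fin l, a i.1 ^ j i / (((j i).factorial : ℝ))) * c (∑ i, j i) := by
  classical
  have h1 : (∑ m ∈ range (l + 1), C (c m / (m.factorial : ℝ)) * X ^ m).comp
      (∑ i ∈ range k, C (a i) * X ^ (i + 1))
      = ∑ m ∈ range (l + 1), C (c m / (m.factorial : ℝ)) *
          (∑ i ∈ range k, C (a i) * X ^ (i + 1)) ^ m := by
    simp [Polynomial.comp, eval₂_finset_sum, eval₂_mul, eval₂_C, eval₂_X_pow]
  rw [h1, finset_sum_coeff]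
  have h2 : ∀ m : ℕ, ((∑ i ∈ range k, C (a i) * X ^ (i + 1)) ^ m).coeff l
      = ∑ j ∈ (range k).piAntidiag m, if l = ∑ i ∈ range k, (i + 1) * j i
          then (Nat.multinomial (range k) j : ℝ) * ∏ i ∈ range k, a i ^ j i else 0 := by
    intro m
    rw [Finset.sum_pow_eq_sum_piAntidiag, finset_sum_coeff]
    refine sum_congr rfl fun j hj => ?_
    have hprod : ∏ i ∈ range k, (C (a i) * X ^ (i + 1)) ^ j i
        = C (∏ i ∈ range k, a i ^ j i) * X ^ (∑ i ∈ range k, (i + 1) * j i) := by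
      simp_rw [mul_pow, ← C_pow, ← pow_mul]
      rw [prod_mul_distrib, prod_pow_eq_pow_sum]
      congr 1
      exact (map_prod (C : ℝ →+* ℝ[X]) (fun i => a i ^ j i) (range k)).symm
    rw [hprod, show ((Nat.multinomial (range k) j : ℝ[X]))
        = C ((Nat.multinomial (range k) j : ℝ)) from (Polynomial.C_eq_natCast _).symm,
      ← mul_assoc, ← C_mul, coeff_C_mul, coeff_X_pow, mul_ite, mul_one, mul_zero]
  simp_rw [coeff_C_mul, h2, Finset.mul_sum, mul_ite, mul_zero, ← Finset.sum_filter]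
  rw [Finset.sum_sigma']
  refine Finset.sum_nbij' (fun p => fun i : Fin l => p.2 i.1)
    (fun q => ⟨∑ i, q i, fun i => if h : i < l then q ⟨i, h⟩ else 0⟩) ?_ ?_ ?_ ?_ ?_
  · -- forward membership
    rintro ⟨m, j⟩ hp
    rw [Finset.mem_sigma, mem_filter, mem_piAntidiag] at hp
    obtain ⟨hm, ⟨hsum, hsupp⟩, hcond⟩ := hp
    dsimp only at hm hsum hsupp hcond ⊢
    have hz := support_lt hsupp hcond.symm
    rw [mem_filter]
    constructor
    · rw [Fintype.mem_piFinset]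
      intro i
      rw [mem_range]
      by_cases h0 : j i.1 = 0
      · omega
      · have hle : j i.1 ≤ ∑ i ∈ range k, j i :=
          single_le_sum (f := j) (fun _ _ => Nat.zero_le _) (hsupp _ h0)
        rw [hsum] at hle
        rw [mem_range] at hm
        omega
    · have := transfer_sum hl j hz (fun i n => (i + 1) * n) (fun i => by ring)
      rw [this] at hcond
      exact hcond.symm
  · -- backward membership
    rintro q hq
    rw [mem_filter, Fintype.mem_piFinset] at hq
    obtain ⟨hqb, hqc⟩ := hq
    set e : ℕ → ℕ := fun i => if h : i < l then q ⟨i, h⟩ else 0 with he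
    have hze : ∀ i, e i ≠ 0 → i < l := by
      intro i hi
      by_contra h
      exact hi (dif_neg h)
    have hev : ∀ i : Fin l, e i.1 = q i := by
      intro i
      simp [he, i.isLt]
    rw [Finset.mem_sigma, mem_filter, mem_piAntidiag]
    have hesum : ∑ i ∈ range k, e i = ∑ i, q i := by
      rw [transfer_sum hl e hze (fun _ n => n) (fun _ => rfl)]
      exact Finset.sum_congr rfl fun i _ => hev i
    refine ⟨?_, ⟨hesum, fun i hi => mem_range.mpr (lt_of_lt_of_le (hze i hi) hl)⟩, ?_⟩
    · rw [mem_range]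
      have hle : ∑ i, q i ≤ ∑ i : Fin l, (i.1 + 1) * q i := by
        refine Finset.sum_le_sum fun i _ => ?_
        have := Nat.succ_pos i.1
        nlinarith [Nat.le_mul_of_pos_left (q i) (Nat.succ_pos i.1)]
      exact Nat.lt_succ_of_le (le_of_le_of_eq hle hqc)
    · rw [transfer_sum hl e hze (fun i n => (i + 1) * n) (fun i => by ring)]
      rw [show ∑ i : Fin l, (i.1 + 1) * e i.1 = ∑ i : Fin l, (i.1 + 1) * q i from
        Finset.sum_congr rfl fun i _ => by rw [hev i]]
      exact hqc.symm
  · -- left inverse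
    rintro ⟨m, j⟩ hp
    rw [Finset.mem_sigma, mem_filter, mem_piAntidiag] at hp
    obtain ⟨hm, ⟨hsum, hsupp⟩, hcond⟩ := hp
    dsimp only at hm hsum hsupp hcond ⊢
    have hz := support_lt hsupp hcond.symm
    have h1 : ∑ i : Fin l, j i.1 = m := by
      rw [← transfer_sum hl j hz (fun _ n => n) (fun _ => rfl), hsum]
    have h2 : (fun i => if h : i < l then j (⟨i, h⟩ : Fin l).1 else 0) = j := by
      funext i
      by_cases h : i < l
      · simp [h]
      · have hj0 : j i = 0 := by
          by_contra hne
          exact h (hz i hne)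
        simp [h, hj0]
    show (⟨∑ i : Fin l, j i.1, fun i => if h : i < l then j (⟨i, h⟩ : Fin l).1 else 0⟩ :
      Σ _ : ℕ, ℕ → ℕ) = ⟨m, j⟩
    rw [h1, h2]
  · -- right inverse
    rintro q hq
    funext i
    dsimp only
    simp [i.isLt]
  · -- term equality
    rintro ⟨m, j⟩ hp
    rw [Finset.mem_sigma, mem_filter, mem_piAntidiag] at hp
    obtain ⟨hm, ⟨hsum, hsupp⟩, hcond⟩ := hp
    dsimp only at hm hsum hsupp hcond ⊢
    have hz := support_lt hsupp hcond.symm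
    have hsv : ∑ i : Fin l, j i.1 = m := by
      rw [← transfer_sum hl j hz (fun _ n => n) (fun _ => rfl), hsum]
    have hpa : ∏ i ∈ range k, a i ^ j i = ∏ i : Fin l, a i.1 ^ j i.1 :=
      transfer_prod hl j hz (fun i n => a i ^ n) (fun i => pow_zero _)
    have h5 : ∏ i ∈ range k, (j i).factorial = ∏ i : Fin l, (j i.1).factorial :=
      transfer_prod hl j hz (fun _ n => n.factorial) (fun _ => rfl)
    have hmult : (Nat.multinomial (range k) j : ℝ) * ∏ i : Fin l, ((j i.1).factorial : ℝ)
        = (m.factorial : ℝ) := by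
      have hs := Nat.multinomial_spec (range k) j
      rw [hsum, h5] at hs
      rw [mul_comm] at hs
      exact_mod_cast congrArg (Nat.cast : ℕ → ℝ) hs
    have hPJ : (∏ i : Fin l, ((j i.1).factorial : ℝ)) ≠ 0 :=
      Finset.prod_ne_zero_iff.mpr fun i _ => Nat.cast_ne_zero.mpr (Nat.factorial_ne_zero _)
    have hmf : (m.factorial : ℝ) ≠ 0 := Nat.cast_ne_zero.mpr (Nat.factorial_ne_zero _)
    have hmu : (Nat.multinomial (range k) j : ℝ)
        = (m.factorial : ℝ) / ∏ i : Fin l, ((j i.1).factorial : ℝ) :=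
      (eq_div_iff hPJ).mpr hmult
    show c m / (m.factorial : ℝ) * ((Nat.multinomial (range k) j : ℝ) * ∏ i ∈ range k, a i ^ j i)
      = (∏ i : Fin l, a i.1 ^ j i.1 / ((j i.1).factorial : ℝ)) * c (∑ i : Fin l, j i.1)
    rw [hsv, hpa, hmu, prod_div_distrib]
    field_simp

end FaaDiBrunoAux

/-- Faà di Bruno for reparametrised flows: with `g(λ) = ∑_{i=1}^k α_i λ^i/i!`
(here `α i` encodes `α_{i+1}`), the `l`-th derivative at `λ = 0` of
`λ ↦ f(φ(g(λ), x))` is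
`l! ∑_{∑ i j_i = l} (∏ α_i^{j_i}/(i!^{j_i} j_i!)) (L_ξ^{j₁+⋯+j_l} f)(x)`. -/
theorem faa_di_bruno_reparametrised_flow
    (ξ : ℝ → ℝ) (hξ : ContDiff ℝ (⊤ : ℕ∞) ξ) (φ : ℝ → ℝ → ℝ)
    (hflow : ∀ t x, HasDerivAt (fun s => φ s x) (ξ (φ t x)) t)
    (hinit : ∀ x, φ 0 x = x)
    (f : ℝ → ℝ) (hf : ContDiff ℝ (⊤ : ℕ∞) f)
    (k : ℕ) (α : ℕ → ℝ) (l : ℕ) (hl : l ≤ k) (x : ℝ) :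
    iteratedDeriv l
        (fun lam => f (φ (∑ i ∈ Finset.range k,
          α i * lam ^ (i + 1) / (Nat.factorial (i + 1))) x)) 0 =
      (Nat.factorial l : ℝ) *
        ∑ j ∈ Finset.filter (fun j : Fin l → ℕ => ∑ i, (i.1 + 1) * j i = l)
            (Fintype.piFinset fun _ : Fin l => Finset.range (l + 1)),
          (∏ i : Fin l, α i.1 ^ j i /
              ((Nat.factorial (i.1 + 1) : ℝ) ^ j i * (Nat.factorial (j i) : ℝ))) *
            ((lieDeriv ξ)^[∑ i, j i] f) x := by
  classical
  have hξ' : ContDiff ℝ ∞ ξ := hξ.of_le (by simp)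
  have hf' : ContDiff ℝ ∞ f := hf.of_le (by simp)
  have hφx : ContDiff ℝ ∞ (fun t => φ t x) := FaaDiBrunoAux.flow_contDiff hξ' hflow x
  have hh : ContDiff ℝ ∞ (fun t => f (φ t x)) := hf'.comp hφx
  set G : ℝ[X] := ∑ i ∈ Finset.range k, C (α i / ((i + 1).factorial : ℝ)) * X ^ (i + 1)
    with hG
  have hgev : ∀ lam : ℝ,
      (∑ i ∈ Finset.range k, α i * lam ^ (i + 1) / (Nat.factorial (i + 1) : ℝ))
        = G.eval lam := by
    intro lam
    rw [hG, Polynomial.eval_finset_sum]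
    refine Finset.sum_congr rfl fun i _ => ?_
    simp only [Polynomial.eval_mul, Polynomial.eval_C, Polynomial.eval_pow, Polynomial.eval_X]
    ring
  have hG0 : G.coeff 0 = 0 := by
    rw [hG, finset_sum_coeff]
    refine Finset.sum_eq_zero fun i _ => ?_
    simp [coeff_C_mul, coeff_X_pow]
  have hit : ∀ m : ℕ, iteratedDeriv m (fun t => f (φ t x)) 0 = (lieDeriv ξ)^[m] f x := by
    intro m
    rw [FaaDiBrunoAux.itd_flow hξ' hflow x m f hf']
    show (lieDeriv ξ)^[m] f (φ 0 x) = _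
    rw [hinit x]
  simp only [hgev]
  have key : iteratedDeriv l (fun lam : ℝ => f (φ (G.eval lam) x)) 0
      = (l.factorial : ℝ) * ((∑ m ∈ Finset.range (l + 1),
          C ((lieDeriv ξ)^[m] f x / (m.factorial : ℝ)) * X ^ m).comp G).coeff l := by
    have k1 := FaaDiBrunoAux.jet_comp (fun t => f (φ t x)) hh G hG0 l
    simp only [hit] at k1
    exact k1
  have hcc : ((∑ m ∈ Finset.range (l + 1),
        C ((lieDeriv ξ)^[m] f x / (m.factorial : ℝ)) * X ^ m).comp G).coeff l
      = ∑ j ∈ Finset.filter (fun j : Fin l → ℕ => ∑ i, (i.1 + 1) * j i = l)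
            (Fintype.piFinset fun _ : Fin l => Finset.range (l + 1)),
          (∏ i : Fin l, (α i.1 / ((i.1 + 1).factorial : ℝ)) ^ j i / ((j i).factorial : ℝ)) *
            ((lieDeriv ξ)^[∑ i, j i] f) x :=
    FaaDiBrunoAux.coeff_comp k l hl (fun i => α i / ((i + 1).factorial : ℝ))
      (fun m => (lieDeriv ξ)^[m] f x)
  rw [key, hcc]
  congr 1
  refine Finset.sum_congr rfl fun j hj => ?_
  congr 1
  refine Finset.prod_congr rfl fun i _ => ?_
  rw [div_pow, div_div]
end
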